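/- Let G be a compactly generated locally compact group with compact generating set S, H a closed subgroup such that G is H-combable, and ℓ : G → ℝ≥0 a subadditive length function (ℓ(gh) ≤ ℓ(g) + ℓ(h)) that is sublinear on H with respect to the restricted word length of G. Then ℓ is sublinear on all of G. -/

import Mathlib

open Pointwise

noncomputable def wordLength {G : Type*} [Group G] (S : Set G) (g : G) : ℕ :=
  sInf {n : ℕ | g ∈ S ^ n}

/-!
Write `|g|` for the word length. Sublinearity of `ℓ` on a set `A` is equivalent to: for every
`ε > 0` there is `B` with `ℓ g ≤ ε |g| + B` on `A` (below any fixed radius `ℓ` is bounded,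
being subadditive and bounded on `S`). Combing `g = w₁ ⋯ w_k` with
`∑ |wᵢ| ≤ C |g|` and applying this to each piece with `ε / C` gives
`ℓ g ≤ ℓ 1 + ε |g| + k B`, i.e. the affine bound on all of `G`.
-/

section Subadditive

variable {G : Type*} [Group G] {ℓ : G → ℝ}

theorem nonneg_at_one_of_subadditive (hℓ : ∀ g h, ℓ (g * h) ≤ ℓ g + ℓ h) : 0 ≤ ℓ 1 := by
  have := hℓ 1 1
  rw [one_mul] at this
  linarith

theorem le_add_sum_ofFn_of_subadditive (hℓ : ∀ g h, ℓ (g * h) ≤ ℓ g + ℓ h) :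
    ∀ {n : ℕ} (w : Fin n → G), ℓ (List.ofFn w).prod ≤ ℓ 1 + ∑ i, ℓ (w i)
  | 0, _ => by simp
  | n + 1, w => by
    rw [List.ofFn_succ, List.prod_cons, Fin.sum_univ_succ]
    linarith [hℓ (w 0) (List.ofFn fun i => w i.succ).prod,
      le_add_sum_ofFn_of_subadditive hℓ fun i => w i.succ]

end Subadditive

section WordLength

variable {G : Type*} [Group G] {S : Set G} {ℓ : G → ℝ} {M : ℝ}

theorem mem_pow_wordLength (hS : ∀ g : G, ∃ n : ℕ, g ∈ S ^ n) (g : G) :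
    g ∈ S ^ wordLength S g :=
  Nat.sInf_mem (hS g)

theorem le_of_mem_pow (hℓ : ∀ g h, ℓ (g * h) ≤ ℓ g + ℓ h) (hM : ∀ s ∈ S, ℓ s ≤ M)
    {g : G} {n : ℕ} (hg : g ∈ S ^ n) : ℓ g ≤ ℓ 1 + n * M := by
  obtain ⟨w, rfl⟩ := Set.mem_pow.mp hg
  calc ℓ (List.ofFn fun i => (w i : G)).prod ≤ ℓ 1 + ∑ i, ℓ (w i) :=
        le_add_sum_ofFn_of_subadditive hℓ _
    _ ≤ ℓ 1 + ∑ _i : Fin n, M := by gcongr with i; exact hM _ (w i).2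
    _ = ℓ 1 + n * M := by simp

theorem le_mul_wordLength_add_of_eventually_le
    (hS : ∀ g : G, ∃ n : ℕ, g ∈ S ^ n) (hℓ : ∀ g h, ℓ (g * h) ≤ ℓ g + ℓ h)
    (hM : ∀ s ∈ S, ℓ s ≤ M) (hM0 : 0 ≤ M) {A : Set G} {ε : ℝ} (hε : 0 ≤ ε) {N : ℕ}
    (hN : ∀ g ∈ A, N ≤ wordLength S g → ℓ g ≤ ε * wordLength S g) :
    ∀ g ∈ A, ℓ g ≤ ε * wordLength S g + (ℓ 1 + N * M) := by
  intro g hg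
  have hεg : 0 ≤ ε * wordLength S g := by positivity
  rcases le_or_gt N (wordLength S g) with hlarge | hsmall
  · linarith [hN g hg hlarge, nonneg_at_one_of_subadditive hℓ, mul_nonneg (Nat.cast_nonneg N) hM0]
  · have hsmall' : (wordLength S g : ℝ) ≤ N := by exact_mod_cast hsmall.le
    linarith [le_of_mem_pow hℓ hM (mem_pow_wordLength hS g),
      mul_le_mul_of_nonneg_right hsmall' hM0]

theorem sublinear_of_forall_le_mul_wordLength_add
    (h : ∀ ε : ℝ, 0 < ε → ∃ B : ℝ, ∀ g : G, ℓ g ≤ ε * wordLength S g + B) :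
    ∀ ε : ℝ, 0 < ε → ∃ N : ℕ, ∀ g : G, N ≤ wordLength S g → ℓ g ≤ ε * wordLength S g := by
  intro ε hε
  obtain ⟨B, hB⟩ := h (ε / 2) (half_pos hε)
  refine ⟨⌈2 * B / ε⌉₊, fun g hg => ?_⟩
  have hBg : 2 * B / ε ≤ wordLength S g := (Nat.le_ceil _).trans (by exact_mod_cast hg)
  rw [div_le_iff₀ hε] at hBg
  linarith [hB g]

end WordLength

theorem ofFn_prod_le_of_forall_le {G : Type*} [Group G] {ℓ : G → ℝ}
    (hℓ : ∀ g h, ℓ (g * h) ≤ ℓ g + ℓ h) (L : G → ℝ) {δ B : ℝ} {k : ℕ} (w : Fin k → G)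
    (hw : ∀ i, ℓ (w i) ≤ δ * L (w i) + B) :
    ℓ (List.ofFn w).prod ≤ ℓ 1 + δ * ∑ i, L (w i) + k * B := by
  calc ℓ (List.ofFn w).prod ≤ ℓ 1 + ∑ i, ℓ (w i) := le_add_sum_ofFn_of_subadditive hℓ w
    _ ≤ ℓ 1 + ∑ i, (δ * L (w i) + B) := by gcongr with i; exact hw i
    _ = ℓ 1 + δ * ∑ i, L (w i) + k * B := by
      rw [Finset.sum_add_distrib, Finset.mul_sum]; simp [add_assoc]

theorem stmt12_general {G : Type*} [Group G]
    (S : Set G) (hS1 : (1 : G) ∈ S)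
    (hSgen : ∀ g : G, ∃ n : ℕ, g ∈ S ^ n)
    (H : Subgroup G)
    (ℓ : G → ℝ)
    (hℓsub : ∀ g h : G, ℓ (g * h) ≤ ℓ g + ℓ h)
    (M : ℝ) (hM : ∀ s ∈ S, ℓ s ≤ M)
    (k : ℕ) (C : ℝ) (hC : 1 ≤ C)
    (hcomb : ∀ g : G, ∃ w : Fin k → G, (∀ i, w i ∈ S ∪ (H : Set G)) ∧
      (List.ofFn w).prod = g ∧
      (∑ i, (wordLength S (w i) : ℝ)) ≤ C * wordLength S g)
    (hHsub : ∀ ε : ℝ, 0 < ε → ∃ N : ℕ, ∀ h ∈ H,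
      N ≤ wordLength S h → ℓ h ≤ ε * wordLength S h) :
    ∀ ε : ℝ, 0 < ε → ∃ N : ℕ, ∀ g : G,
      N ≤ wordLength S g → ℓ g ≤ ε * wordLength S g := by
  have hC0 : 0 < C := one_pos.trans_le hC
  have hM0 : 0 ≤ M := (nonneg_at_one_of_subadditive hℓsub).trans (hM 1 hS1)
  refine sublinear_of_forall_le_mul_wordLength_add fun ε hε => ?_
  have hδ : 0 < ε / C := div_pos hε hC0
  obtain ⟨N, hN⟩ := hHsub (ε / C) hδ
  have hH := le_mul_wordLength_add_of_eventually_le hSgen hℓsub hM hM0 hδ.le hN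
  set B := max (ℓ 1 + N * M) M
  have hpiece : ∀ w ∈ S ∪ (H : Set G), ℓ w ≤ ε / C * wordLength S w + B := by
    rintro w (hwS | hwH)
    · have : 0 ≤ ε / C * wordLength S w := by positivity
      linarith [hM w hwS, le_max_right (ℓ 1 + N * M) M]
    · linarith [hH w hwH, le_max_left (ℓ 1 + N * M) M]
  refine ⟨ℓ 1 + k * B, fun g => ?_⟩
  obtain ⟨w, hwSH, rfl, hwC⟩ := hcomb g
  have hprod := ofFn_prod_le_of_forall_le hℓsub (fun x => (wordLength S x : ℝ)) w
    fun i => hpiece (w i) (hwSH i)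
  have hcombC :
      ε / C * ∑ i, (wordLength S (w i) : ℝ) ≤ ε * wordLength S (List.ofFn w).prod := by
    calc ε / C * ∑ i, (wordLength S (w i) : ℝ)
        ≤ ε / C * (C * wordLength S (List.ofFn w).prod) := by gcongr
      _ = ε * wordLength S (List.ofFn w).prod := by field_simp
  linarith

/-- if `G` is `H`-combable and a subadditive length function `ℓ`, bounded on
`S`, is sublinear on `H`, then `ℓ` is sublinear on all of `G`. -/
theorem stmt12 {G : Type*} [Group G] [TopologicalSpace G] [IsTopologicalGroup G]
    [LocallyCompactSpace G]
    (S : Set G) (hScomp : IsCompact S) (hS1 : (1 : G) ∈ S) (hSsymm : S⁻¹ = S)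
    (hSgen : ∀ g : G, ∃ n : ℕ, g ∈ S ^ n)
    (H : Subgroup G) (hHclosed : IsClosed (H : Set G))
    (ℓ : G → ℝ) (hℓ0 : ∀ g, 0 ≤ ℓ g)
    (hℓsub : ∀ g h : G, ℓ (g * h) ≤ ℓ g + ℓ h)
    (M : ℝ) (hM : ∀ s ∈ S, ℓ s ≤ M)
    (k : ℕ) (C : ℝ) (hC : 1 ≤ C)
    (hcomb : ∀ g : G, ∃ w : Fin k → G, (∀ i, w i ∈ S ∪ (H : Set G)) ∧
      (List.ofFn w).prod = g ∧
      (∑ i, (wordLength S (w i) : ℝ)) ≤ C * wordLength S g)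
    (hHsub : ∀ ε : ℝ, 0 < ε → ∃ N : ℕ, ∀ h ∈ H,
      N ≤ wordLength S h → ℓ h ≤ ε * wordLength S h) :
    ∀ ε : ℝ, 0 < ε → ∃ N : ℕ, ∀ g : G,
      N ≤ wordLength S g → ℓ g ≤ ε * wordLength S g :=
  stmt12_general S hS1 hSgen H ℓ hℓsub M hM k C hC hcomb hHsub
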